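/- For nonnegative integers α, β, γ with 1 - α - β + γ = 0 and a complex number c, the terminating basic hypergeometric series satisfies the q ↦ q^{-1} symmetry: ∑_{k=0}^{min(α,β)} ((q^{-α};q^{-1})_k (q^{-β};q^{-1})_k / ((q^{-1};q^{-1})_k (q^{-γ};q^{-1})_k)) c^k = ∑_{k=0}^{min(α,β)} ((q^{α};q)_k (q^{β};q)_k / ((q;q)_k (q^{γ};q)_k)) c^k, i.e., ₂φ₁(q^{-α}, q^{-β}; q^{-γ}; q^{-1}; c) = ₂φ₁(q^{α}, q^{β}; q^{γ}; q; c), provided no denominator vanishes. -/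

import Mathlib

/-- The q-Pochhammer symbol `(a;p)_k = ∏_{j=0}^{k-1} (1 - a p^j)`. -/
noncomputable def qPoch (a p : ℂ) (k : ℕ) : ℂ := ∏ j ∈ Finset.range k, (1 - a * p ^ j)

/-
Termwise: each factor satisfies `1 - a⁻¹ p⁻ʲ = -(a pʲ)⁻¹ (1 - a pʲ)`, so inverting base and
argument multiplies `(a;p)_k` by `∏ⱼ -(a pʲ)⁻¹`. In the ratio of the series coefficient these
prefactors cancel exactly when the products of the upper and lower parameters agree, which for
`qᵅ, qᵝ` against `q, qᵞ` is the balancing condition `γ + 1 = α + β`.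
-/

open Finset

theorem qPoch_inv_inv {a p : ℂ} (ha : a ≠ 0) (hp : p ≠ 0) (k : ℕ) :
    qPoch a⁻¹ p⁻¹ k = (∏ j ∈ range k, -(a * p ^ j)⁻¹) * qPoch a p k := by
  rw [qPoch, qPoch, ← prod_mul_distrib]
  refine prod_congr rfl fun j _ => ?_
  have : p ^ j ≠ 0 := pow_ne_zero j hp
  rw [inv_pow]
  field_simp
  ring

theorem prod_neg_inv_mul_pow_eq {a b c d p : ℂ} (h : a * b = c * d) (k : ℕ) :
    (∏ j ∈ range k, -(a * p ^ j)⁻¹) * ∏ j ∈ range k, -(b * p ^ j)⁻¹ =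
      (∏ j ∈ range k, -(c * p ^ j)⁻¹) * ∏ j ∈ range k, -(d * p ^ j)⁻¹ := by
  rw [← prod_mul_distrib, ← prod_mul_distrib]
  refine prod_congr rfl fun j _ => ?_
  calc -(a * p ^ j)⁻¹ * -(b * p ^ j)⁻¹ = (a * b * p ^ j * p ^ j)⁻¹ := by ring
    _ = (c * d * p ^ j * p ^ j)⁻¹ := by rw [h]
    _ = -(c * p ^ j)⁻¹ * -(d * p ^ j)⁻¹ := by ring

theorem qPoch_inv_inv_ratio {a b c d p : ℂ} (ha : a ≠ 0) (hb : b ≠ 0) (hc : c ≠ 0)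
    (hd : d ≠ 0) (hp : p ≠ 0) (h : a * b = c * d) (k : ℕ) :
    qPoch a⁻¹ p⁻¹ k * qPoch b⁻¹ p⁻¹ k / (qPoch c⁻¹ p⁻¹ k * qPoch d⁻¹ p⁻¹ k) =
      qPoch a p k * qPoch b p k / (qPoch c p k * qPoch d p k) := by
  have hne : (∏ j ∈ range k, -(c * p ^ j)⁻¹) * ∏ j ∈ range k, -(d * p ^ j)⁻¹ ≠ 0 := by
    simp [prod_eq_zero_iff, hc, hd, hp]
  rw [qPoch_inv_inv ha hp, qPoch_inv_inv hb hp, qPoch_inv_inv hc hp, qPoch_inv_inv hd hp,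
    mul_mul_mul_comm, mul_mul_mul_comm _ (qPoch c p k), prod_neg_inv_mul_pow_eq h,
    mul_div_mul_left _ _ hne]

theorem two_phi_one_q_inverse_symm_general (q c : ℂ) (hq : q ≠ 0) (α β γ : ℕ)
    (hγ : γ + 1 = α + β) :
    (∑ k ∈ Finset.range (min α β + 1),
        qPoch (q ^ (-(α : ℤ))) q⁻¹ k * qPoch (q ^ (-(β : ℤ))) q⁻¹ k /
          (qPoch q⁻¹ q⁻¹ k * qPoch (q ^ (-(γ : ℤ))) q⁻¹ k) * c ^ k) =
      ∑ k ∈ Finset.range (min α β + 1),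
        qPoch (q ^ (α : ℤ)) q k * qPoch (q ^ (β : ℤ)) q k /
          (qPoch q q k * qPoch (q ^ (γ : ℤ)) q k) * c ^ k := by
  have hbalance : q ^ α * q ^ β = q * q ^ γ := by rw [← pow_add, ← pow_succ', hγ]
  refine sum_congr rfl fun k _ => ?_
  simp only [zpow_neg, zpow_natCast]
  rw [qPoch_inv_inv_ratio (pow_ne_zero α hq) (pow_ne_zero β hq) hq (pow_ne_zero γ hq) hq
    hbalance]

/-- `q ↦ q⁻¹` symmetry of the terminating basic hypergeometric series: for
nonnegative integers `α, β, γ` with `1 - α - β + γ = 0` (i.e. `γ + 1 = α + β`),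
`₂φ₁(q^{-α}, q^{-β}; q^{-γ}; q^{-1}; c) = ₂φ₁(q^{α}, q^{β}; q^{γ}; q; c)`,
provided no denominator vanishes. -/
theorem two_phi_one_q_inverse_symm (q c : ℂ) (hq : q ≠ 0) (α β γ : ℕ)
    (hγ : γ + 1 = α + β)
    (hden : ∀ k ≤ min α β, qPoch q⁻¹ q⁻¹ k ≠ 0 ∧ qPoch (q ^ (-(γ : ℤ))) q⁻¹ k ≠ 0 ∧
      qPoch q q k ≠ 0 ∧ qPoch (q ^ (γ : ℤ)) q k ≠ 0) :
    (∑ k ∈ Finset.range (min α β + 1),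
        qPoch (q ^ (-(α : ℤ))) q⁻¹ k * qPoch (q ^ (-(β : ℤ))) q⁻¹ k /
          (qPoch q⁻¹ q⁻¹ k * qPoch (q ^ (-(γ : ℤ))) q⁻¹ k) * c ^ k) =
      ∑ k ∈ Finset.range (min α β + 1),
        qPoch (q ^ (α : ℤ)) q k * qPoch (q ^ (β : ℤ)) q k /
          (qPoch q q k * qPoch (q ^ (γ : ℤ)) q k) * c ^ k :=
  two_phi_one_q_inverse_symm_general q c hq α β γ hγ
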